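/- Let A be the (d+1)×(d+1) matrix obtained from Eᵀ D E by replacing its first column (the column of index j = 0) with the vector Eᵀ D f, where f = (f_1, …, f_N) ∈ ℝ^N. Then det(A) = Σ_{i_0=1}^N w_{i_0} f_{i_0} · Σ_{i_1=1}^N ⋯ Σ_{i_d=1}^N w_{i_1} ⋯ w_{i_d} · (x_{i_1} − x)(x_{i_2} − x)² ⋯ (x_{i_d} − x)^d · ∏_{0 ≤ k < l ≤ d} (x_{i_l} − x_{i_k}). -/

import Mathlib

/-!
Since `A = Eᵀ D F` with `F = E.updateCol 0 f`, the rows of `Aᵀ = (Fᵀ D) E` are combinations of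
the rows of `E`. Expanding the determinant multilinearly in these rows writes `det A` as a sum over
all maps `σ : Fin (d + 1) → Fin N` of `∏ l, w (σ l) F (σ l) l` times the determinant of the rows
`σ` of `E`, which is the Vandermonde determinant of the nodes `xs (σ l) - x`. Writing
`σ = Fin.cons i0 τ` separates the factor `w i0 f i0` coming from the replaced column.
-/

open Matrix

namespace Matrix

variable {n ι R : Type*} [Fintype n] [DecidableEq n] [Fintype ι] [CommRing R]

theorem det_mul_eq_sum_prod_mul_det_submatrix (M : Matrix n ι R) (N : Matrix ι n R) :
    det (M * N) = ∑ σ : n → ι, (∏ j, M j (σ j)) * det (N.submatrix σ id) := by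
  have hrows : M * N = of fun j => ∑ i, M j i • N i := by
    ext j k
    simp [mul_apply, Finset.sum_apply]
  rw [hrows]
  exact ((detRowAlternating (R := R) (n := n)).toMultilinearMap.map_sum _).trans
    (Finset.sum_congr rfl fun σ _ =>
      (detRowAlternating (R := R) (n := n)).toMultilinearMap.map_smul_univ _ _)

end Matrix

theorem Fin.sum_univ_fun_succ {α M : Type*} [Fintype α] [AddCommMonoid M] {n : ℕ}
    (g : (Fin (n + 1) → α) → M) :
    ∑ σ, g σ = ∑ a, ∑ τ : Fin n → α, g (Fin.cons a τ) := by
  rw [← (Fin.consEquiv fun _ => α).sum_comp, Fintype.sum_prod_type]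
  rfl

theorem det_cramer_numerator_explicit_general
    (d N : ℕ) (x : ℝ) (xs : Fin N → ℝ) (w : Fin N → ℝ)
    (f : Fin N → ℝ)
    (E : Matrix (Fin N) (Fin (d + 1)) ℝ)
    (hE : ∀ i j, E i j = (xs i - x) ^ (j : ℕ))
    (D : Matrix (Fin N) (Fin N) ℝ) (hD : D = Matrix.diagonal w)
    (A : Matrix (Fin (d + 1)) (Fin (d + 1)) ℝ)
    (hA : A = (Eᵀ * D * E).updateCol 0 ((Eᵀ * D).mulVec f)) :
    A.det =
      ∑ i0 : Fin N, w i0 * f i0 *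
        ∑ τ : Fin d → Fin N,
          (∏ k, w (τ k)) * (∏ k : Fin d, (xs (τ k) - x) ^ ((k : ℕ) + 1)) *
            ∏ k : Fin (d + 1), ∏ l ∈ Finset.Ioi k,
              (xs ((Fin.cons i0 τ : Fin (d + 1) → Fin N) l) -
                xs ((Fin.cons i0 τ : Fin (d + 1) → Fin N) k)) := by
  set F := E.updateCol 0 f
  have hAt : Aᵀ = Fᵀ * diagonal w * E := by
    rw [hA, hD, ← mul_updateCol, transpose_mul, transpose_mul, diagonal_transpose,
      transpose_transpose, Matrix.mul_assoc]
  have hvdm (σ : Fin (d + 1) → Fin N) :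
      det (E.submatrix σ id) = ∏ k, ∏ l ∈ Finset.Ioi k, (xs (σ l) - xs (σ k)) := by
    rw [show E.submatrix σ id = vandermonde fun l => xs (σ l) - x from ext fun _ _ => hE _ _,
      det_vandermonde_sub, det_vandermonde]
  have hcoef (i0 : Fin N) (τ : Fin d → Fin N) :
      ∏ j, (Fᵀ * diagonal w) j ((Fin.cons i0 τ : Fin (d + 1) → Fin N) j) =
        w i0 * f i0 * ((∏ k, w (τ k)) * ∏ k : Fin d, (xs (τ k) - x) ^ ((k : ℕ) + 1)) := by
    simp only [Fin.prod_univ_succ, mul_diagonal, transpose_apply, F, updateCol_self, Fin.cons_zero,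
      Fin.cons_succ, updateCol_ne (Fin.succ_ne_zero _), hE, Fin.val_succ, Finset.prod_mul_distrib]
    ring
  rw [← det_transpose, hAt, det_mul_eq_sum_prod_mul_det_submatrix, Fin.sum_univ_fun_succ]
  simp only [hcoef, hvdm, mul_assoc, Finset.mul_sum]

/-- explicit expansion of the determinant of the matrix obtained
from `Eᵀ D E` by replacing its first column (index `j = 0`) with `Eᵀ D f`. -/
theorem det_cramer_numerator_explicit
    (d N : ℕ) (hN : d + 1 ≤ N) (x : ℝ) (xs : Fin N → ℝ) (w : Fin N → ℝ)
    (f : Fin N → ℝ)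
    (E : Matrix (Fin N) (Fin (d + 1)) ℝ)
    (hE : ∀ i j, E i j = (xs i - x) ^ (j : ℕ))
    (D : Matrix (Fin N) (Fin N) ℝ) (hD : D = Matrix.diagonal w)
    (A : Matrix (Fin (d + 1)) (Fin (d + 1)) ℝ)
    (hA : A = (Eᵀ * D * E).updateCol 0 ((Eᵀ * D).mulVec f)) :
    A.det =
      ∑ i0 : Fin N, w i0 * f i0 *
        ∑ τ : Fin d → Fin N,
          (∏ k, w (τ k)) * (∏ k : Fin d, (xs (τ k) - x) ^ ((k : ℕ) + 1)) *
            ∏ k : Fin (d + 1), ∏ l ∈ Finset.Ioi k,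
              (xs ((Fin.cons i0 τ : Fin (d + 1) → Fin N) l) -
                xs ((Fin.cons i0 τ : Fin (d + 1) → Fin N) k)) :=
  det_cramer_numerator_explicit_general d N x xs w f E hE D hD A hA
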